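/- Suppose a string S[i..j] has smallest period at most τ/4 and |S[i..j]| ≥ τ, and S[i..j] is contained in a τ-run R of S; then R is the unique τ-run containing S[i..j] (no other τ-run can contain it). -/

import Mathlib

/-!
Let `p` and `p'` be the smallest periods of two `τ`-runs that both contain a fragment of
length at least `τ`. Since `p + p' ≤ τ/2`, the two periods commute on the common part:
`S[k] = S[k + p'] = S[k + p' + p] = S[k + p]`. If one run started strictly before the other,
this pushes the period `p` of the later-starting run one position to its left; as every period
of the extension is also one of the run, the extension has the same smallest period,
contradicting maximality. The right ends are handled symmetrically.
-/

/-- `P` occurs at (0-indexed) position `i` of `T`. -/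
def occursAt {α : Type*} (P T : List α) (i : ℕ) : Prop :=
  (T.drop i).take P.length = P

/-- `ρ` is a period of `P`. -/
def isPeriod {α : Type*} (P : List α) (ρ : ℕ) : Prop :=
  0 < ρ ∧ ∀ k, k + ρ < P.length → P[k]? = P[k + ρ]?

/-- The smallest period of `P`. -/
noncomputable def per {α : Type*} (P : List α) : ℕ :=
  sInf {ρ | isPeriod P ρ}

/-- The fragment of `S` on (0-indexed, inclusive) positions `i..j`. -/
def frag {α : Type*} (S : List α) (i j : ℕ) : List α :=
  (S.drop i).take (j - i + 1)

/-- The fragment `S[i..j]` (0-indexed, inclusive) is a `τ`-run of `S`: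
length greater than `3τ`, smallest period at most `τ/4`, and maximal, i.e.,
it cannot be extended in either direction without its smallest period changing. -/
def isTauRun {α : Type*} (S : List α) (τ i j : ℕ) : Prop :=
  i ≤ j ∧ j < S.length ∧ 3 * τ < j - i + 1 ∧ per (frag S i j) ≤ τ / 4 ∧
  (i = 0 ∨ per (frag S (i - 1) j) ≠ per (frag S i j)) ∧
  (j = S.length - 1 ∨ per (frag S i (j + 1)) ≠ per (frag S i j))

def PeriodicOn {α : Type*} (S : List α) (a b ρ : ℕ) : Prop :=
  ∀ k, a ≤ k → k + ρ ≤ b → S[k]? = S[k + ρ]?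

namespace PeriodicOn

variable {α : Type*} {S : List α} {a b a' b' p p' : ℕ}

theorem mono (hp : PeriodicOn S a b p) (ha : a ≤ a') (hb : b' ≤ b) : PeriodicOn S a' b' p :=
  fun k hk hkb => hp k (ha.trans hk) (hkb.trans hb)

theorem pred_left (hp : PeriodicOn S a b p) (hp' : PeriodicOn S a' b' p') (hp'pos : 0 < p')
    (ha' : a' < a) (hov : a - 1 + p + p' ≤ min b b') : PeriodicOn S (a - 1) b p := by
  intro k hk hkb
  rcases Nat.lt_or_ge k a with hka | hka
  · obtain rfl : k = a - 1 := by omega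
    calc S[a - 1]? = S[a - 1 + p']? := hp' _ (by omega) (by omega)
      _ = S[a - 1 + p' + p]? := hp _ (by omega) (by omega)
      _ = S[a - 1 + p + p']? := by rw [Nat.add_right_comm]
      _ = S[a - 1 + p]? := (hp' _ (by omega) (by omega)).symm
  · exact hp k hka hkb

theorem succ_right (hp : PeriodicOn S a b p) (hp' : PeriodicOn S a' b' p') (hp'pos : 0 < p')
    (hb' : b < b') (hov : max a a' + p + p' ≤ b + 1) : PeriodicOn S a (b + 1) p := by
  intro k hk hkb
  rcases Nat.lt_or_ge (k + p) (b + 1) with hkp | hkp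
  · exact hp k hk (by omega)
  · obtain ⟨y, rfl⟩ : ∃ y, k = y + p' := ⟨k - p', by omega⟩
    calc S[y + p']? = S[y]? := (hp' y (by omega) (by omega)).symm
      _ = S[y + p]? := hp y (by omega) (by omega)
      _ = S[y + p + p']? := hp' _ (by omega) (by omega)
      _ = S[y + p' + p]? := by rw [Nat.add_right_comm]

end PeriodicOn

section Periods

variable {α : Type*} {S : List α} {a b a' b' : ℕ}

theorem isPeriod_per (P : List α) : isPeriod P (per P) :=
  Nat.sInf_mem (s := {ρ | isPeriod P ρ})
    ⟨P.length + 1, Nat.succ_pos _, fun _ h => absurd h (by omega)⟩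

theorem isPeriod_frag_iff (hab : a ≤ b) (hb : b < S.length) (ρ : ℕ) :
    isPeriod (frag S a b) ρ ↔ 0 < ρ ∧ PeriodicOn S a b ρ := by
  have hlen : (frag S a b).length = b - a + 1 := by
    simp only [frag, List.length_take, List.length_drop]
    omega
  have hget : ∀ k, k < b - a + 1 → (frag S a b)[k]? = S[a + k]? := fun k hk => by
    rw [frag, List.getElem?_take_of_lt hk, List.getElem?_drop]
  refine and_congr_right fun _ => ⟨fun h k hak hkb => ?_, fun h k hk => ?_⟩
  · have := h (k - a) (by omega)
    rwa [hget _ (by omega), hget _ (by omega), Nat.add_sub_cancel' hak,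
      ← Nat.add_assoc, Nat.add_sub_cancel' hak] at this
  · rw [hlen] at hk
    rw [hget _ (by omega), hget _ (by omega), ← Nat.add_assoc]
    exact h (a + k) (by omega) (by omega)

theorem per_frag_le_of_subset (hab : a ≤ b) (ha : a' ≤ a) (hb : b ≤ b') (hb' : b' < S.length) :
    per (frag S a b) ≤ per (frag S a' b') := by
  obtain ⟨hpos, hper⟩ :=
    (isPeriod_frag_iff (ha.trans (hab.trans hb)) hb' _).mp (isPeriod_per (frag S a' b'))
  exact Nat.sInf_le ((isPeriod_frag_iff hab (by omega) _).mpr ⟨hpos, hper.mono ha hb⟩)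

theorem per_frag_eq_of_periodicOn (hab : a ≤ b) (ha : a' ≤ a) (hb : b ≤ b')
    (hb' : b' < S.length) (hper : PeriodicOn S a' b' (per (frag S a b))) :
    per (frag S a' b') = per (frag S a b) := by
  have hpos := ((isPeriod_frag_iff hab (by omega) _).mp (isPeriod_per (frag S a b))).1
  refine le_antisymm (Nat.sInf_le ?_) (per_frag_le_of_subset hab ha hb hb')
  exact (isPeriod_frag_iff (ha.trans (hab.trans hb)) hb' _).mpr ⟨hpos, hper⟩

end Periods

namespace isTauRun

variable {α : Type*} {S : List α} {τ i j a b a' b' : ℕ}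

theorem per_pos_and_periodicOn (hR : isTauRun S τ a b) :
    0 < per (frag S a b) ∧ PeriodicOn S a b (per (frag S a b)) :=
  (isPeriod_frag_iff hR.1 hR.2.1 _).mp (isPeriod_per _)

theorem le_left (hR : isTauRun S τ a b) (hR' : isTauRun S τ a' b') (hij : i + τ ≤ j + 1)
    (ha : a ≤ i) (hb : j ≤ b) (hb' : j ≤ b') : a ≤ a' := by
  by_contra! hlt
  obtain ⟨-, hper⟩ := hR.per_pos_and_periodicOn
  obtain ⟨hpos', hper'⟩ := hR'.per_pos_and_periodicOn
  obtain ⟨hab, hbS, -, hpτ, hmax, -⟩ := hR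
  obtain ⟨-, -, -, hp'τ, -, -⟩ := hR'
  have hext := hper.pred_left hper' hpos' hlt (by omega)
  have := per_frag_eq_of_periodicOn hab (Nat.sub_le a 1) le_rfl hbS hext
  omega

theorem le_right (hR : isTauRun S τ a b) (hR' : isTauRun S τ a' b') (hij : i + τ ≤ j + 1)
    (ha : a ≤ i) (hb : j ≤ b) (ha' : a' ≤ i) : b' ≤ b := by
  by_contra! hlt
  obtain ⟨-, hper⟩ := hR.per_pos_and_periodicOn
  obtain ⟨hpos', hper'⟩ := hR'.per_pos_and_periodicOn
  obtain ⟨hab, hbS, -, hpτ, -, hmax⟩ := hR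
  obtain ⟨-, hb'S, -, hp'τ, -, -⟩ := hR'
  have hext := hper.succ_right hper' hpos' hlt (by omega)
  have := per_frag_eq_of_periodicOn hab le_rfl (Nat.le_add_right b 1) (by omega) hext
  omega

end isTauRun

theorem unique_containing_tau_run_general {α : Type*} (S : List α) (τ i j r₁ r₂ : ℕ)
    (hij : i ≤ j)
    (hlen : τ ≤ j - i + 1)
    (hR : isTauRun S τ r₁ r₂) (hc₁ : r₁ ≤ i) (hc₂ : j ≤ r₂) :
    ∀ r₁' r₂' : ℕ, isTauRun S τ r₁' r₂' → r₁' ≤ i → j ≤ r₂' →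
      (r₁', r₂') = (r₁, r₂) := by
  intro r₁' r₂' hR' hc₁' hc₂'
  have hij' : i + τ ≤ j + 1 := by omega
  rw [Prod.mk.injEq]
  exact ⟨le_antisymm (hR'.le_left hR hij' hc₁' hc₂' hc₂) (hR.le_left hR' hij' hc₁ hc₂ hc₂'),
    le_antisymm (hR.le_right hR' hij' hc₁ hc₂ hc₁') (hR'.le_right hR hij' hc₁' hc₂' hc₁)⟩

/-- A fragment `S[i..j]` of length at least `τ` and smallest period at most `τ/4`
that is contained in a `τ`-run `R = S[r₁..r₂]` is contained in no other `τ`-run. -/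
theorem unique_containing_tau_run {α : Type*} (S : List α) (τ i j r₁ r₂ : ℕ)
    (hτ : 4 ≤ τ) (hij : i ≤ j) (hj : j < S.length)
    (hlen : τ ≤ j - i + 1) (hper : per (frag S i j) ≤ τ / 4)
    (hR : isTauRun S τ r₁ r₂) (hc₁ : r₁ ≤ i) (hc₂ : j ≤ r₂) :
    ∀ r₁' r₂' : ℕ, isTauRun S τ r₁' r₂' → r₁' ≤ i → j ≤ r₂' →
      (r₁', r₂') = (r₁, r₂) :=
  unique_containing_tau_run_general S τ i j r₁ r₂ hij hlen hR hc₁ hc₂
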